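/- arXiv:2510.20251 — 3 statements merged into one kernel-verified Lean document; each statement's English description precedes it below -/
import Mathlib

section
/- Let k ≥ t+3 ≥ 4 and n ≥ 2L(k,t), where L(k,t) = (t+1) + (k-t+1)·log₂((t+1)(k-t+1)). Then S(n-t-3, k-t-1) > t·S(n-t-2, k-t-2). -/
/-- Stirling numbers of the second kind. -/
def stirling : ℕ → ℕ → ℕ
  | 0, 0 => 1
  | 0, _ + 1 => 0
  | _ + 1, 0 => 0
  | n + 1, k + 1 => stirling n k + (k + 1) * stirling n (k + 1)

/-- The threshold function `L(k,t) = (t+1) + (k-t+1)·log₂((t+1)(k-t+1))`. -/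
noncomputable def Lkt (k t : ℕ) : ℝ :=
  ((t : ℝ) + 1) + ((k : ℝ) - t + 1) * Real.logb 2 (((t : ℝ) + 1) * ((k : ℝ) - t + 1))

/-!
Multiplying by factorials turns Stirling numbers into counts of surjections. With `a = k - t - 2`
and `m = n - t - 3`, one has `a! S(m+1, a) ≤ a^(m+1)`, while the union bound over the missed point
gives `(a+1)! S(m, a+1) ≥ (a+1)^m - (a+1) a^m`; both are read off the identity
`K^n = ∑_j S(n, j) K (K-1) ⋯ (K-j+1)`. Bernoulli's inequality gives `(a+1)^m ≥ 2^s a^m` whenever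
`a s ≤ m`, and the hypothesis on `n` allows `s = 2 ⌊log₂((t+1)(k-t+1))⌋`, for which `2^s` exceeds
`(a+1)(ta+1)`; that is exactly what the comparison needs.
-/

open Finset

theorem stirling_eq_stirlingSecond : stirling = Nat.stirlingSecond := by
  funext n k
  induction n generalizing k with
  | zero => cases k <;> rfl
  | succ n ih =>
    cases k with
    | zero => rfl
    | succ k => rw [stirling, Nat.stirlingSecond_succ_succ, ih, ih, add_comm]

namespace Nat

theorem mul_descFactorial (K j : ℕ) :
    K * K.descFactorial j = K.descFactorial (j + 1) + j * K.descFactorial j := by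
  rw [descFactorial_succ]
  rcases le_or_gt j K with h | h
  · rw [← add_mul, Nat.sub_add_cancel h]
  · simp [descFactorial_eq_zero_iff_lt.mpr h]

theorem sum_range_succ_stirlingSecond_mul_descFactorial (n K : ℕ) :
    ∑ j ∈ range (n + 1), stirlingSecond n j * K.descFactorial j = K ^ n := by
  induction n with
  | zero => simp
  | succ n ih =>
    have hshift : ∑ i ∈ range (n + 1), (i + 1) * stirlingSecond n (i + 1) * K.descFactorial (i + 1)
        = ∑ j ∈ range (n + 1), j * stirlingSecond n j * K.descFactorial j := by
      rw [sum_range_succ, sum_range_succ' (fun j => j * stirlingSecond n j * K.descFactorial j),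
        stirlingSecond_eq_zero_of_lt (lt_add_one n)]
      simp
    rw [sum_range_succ', stirlingSecond_succ_zero, zero_mul, add_zero]
    simp only [stirlingSecond_succ_succ, Nat.add_mul _ _ (K.descFactorial _), sum_add_distrib,
      hshift]
    rw [pow_succ', ← ih, mul_sum, ← sum_add_distrib]
    refine sum_congr rfl fun j _ => ?_
    rw [mul_left_comm, mul_descFactorial]
    ring

theorem sum_range_stirlingSecond_mul_descFactorial (n K : ℕ) :
    ∑ j ∈ range (K + 1), stirlingSecond n j * K.descFactorial j = K ^ n := by
  have hvanish : ∀ j, n < j ∨ K < j → stirlingSecond n j * K.descFactorial j = 0 := by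
    rintro j (h | h)
    · rw [stirlingSecond_eq_zero_of_lt h, zero_mul]
    · rw [descFactorial_eq_zero_iff_lt.mpr h, mul_zero]
  have hsub : ∀ N, N ≤ n + K + 1 → N = n + 1 ∨ N = K + 1 →
      ∑ j ∈ range N, stirlingSecond n j * K.descFactorial j
        = ∑ j ∈ range (n + K + 1), stirlingSecond n j * K.descFactorial j := by
    rintro N hN hN'
    refine sum_subset (range_subset_range.mpr hN) fun j hj hjN => hvanish j ?_
    simp only [mem_range] at hj hjN
    omega
  rw [hsub (K + 1) (by omega) (Or.inr rfl), ← hsub (n + 1) (by omega) (Or.inl rfl),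
    sum_range_succ_stirlingSecond_mul_descFactorial]

theorem factorial_mul_stirlingSecond_le_pow (n K : ℕ) : K ! * stirlingSecond n K ≤ K ^ n := by
  rw [← sum_range_stirlingSecond_mul_descFactorial n K, sum_range_succ, descFactorial_self,
    mul_comm]
  exact le_add_self

theorem succ_pow_le_factorial_mul_stirlingSecond_add (n K : ℕ) :
    (K + 1) ^ n ≤ (K + 1)! * stirlingSecond n (K + 1) + (K + 1) * K ^ n := by
  rw [← sum_range_stirlingSecond_mul_descFactorial n (K + 1), sum_range_succ, descFactorial_self,
    ← sum_range_stirlingSecond_mul_descFactorial n K, mul_sum, mul_comm (stirlingSecond _ _),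
    add_comm]
  refine add_le_add_right (sum_le_sum fun j hj => ?_) _
  have hj : j < K + 1 := mem_range.mp hj
  calc stirlingSecond n j * (K + 1).descFactorial j
      ≤ stirlingSecond n j * ((K + 1 - j) * (K + 1).descFactorial j) := by
        gcongr; exact Nat.le_mul_of_pos_left _ (by omega)
    _ = (K + 1) * (stirlingSecond n j * K.descFactorial j) := by
        rw [succ_descFactorial]; ring

theorem two_pow_mul_pow_le_succ_pow {a s m : ℕ} (ha : 1 ≤ a) (h : a * s ≤ m) :
    2 ^ s * a ^ m ≤ (a + 1) ^ m := by
  have hbernoulli : 2 * a ^ a ≤ (a + 1) ^ a := by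
    have := pow_add_mul_le_add_pow (Nat.zero_le a) (Nat.zero_le (2 * a + 1)) a
    rwa [Nat.cast_id, mul_one, ← _root_.pow_succ', Nat.sub_add_cancel ha, ← two_mul] at this
  obtain ⟨r, rfl⟩ := Nat.exists_eq_add_of_le h
  calc 2 ^ s * a ^ (a * s + r) = (2 * a ^ a) ^ s * a ^ r := by ring
    _ ≤ ((a + 1) ^ a) ^ s * (a + 1) ^ r := by gcongr; omega
    _ = (a + 1) ^ (a * s + r) := by ring

theorem mul_stirlingSecond_succ_lt {t a m s : ℕ} (ha : 1 ≤ a) (hs : a * s ≤ m)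
    (hst : (a + 1) * (t * a + 1) < 2 ^ s) :
    t * stirlingSecond (m + 1) a < stirlingSecond m (a + 1) := by
  have hupper := factorial_mul_stirlingSecond_le_pow (m + 1) a
  have hlower := succ_pow_le_factorial_mul_stirlingSecond_add m a
  have hgap : (a + 1) * (t * a + 1) * a ^ m < 2 ^ s * a ^ m :=
    Nat.mul_lt_mul_of_pos_right hst (by positivity)
  refine Nat.lt_of_mul_lt_mul_left (a := (a + 1)!) <|
    Nat.lt_of_add_lt_add_right (n := (a + 1) * a ^ m) ?_
  calc (a + 1)! * (t * stirlingSecond (m + 1) a) + (a + 1) * a ^ m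
      = t * (a + 1) * (a ! * stirlingSecond (m + 1) a) + (a + 1) * a ^ m := by
        rw [factorial_succ]; ring
    _ ≤ t * (a + 1) * a ^ (m + 1) + (a + 1) * a ^ m := by gcongr
    _ = (a + 1) * (t * a + 1) * a ^ m := by ring
    _ < 2 ^ s * a ^ m := hgap
    _ ≤ (a + 1) ^ m := two_pow_mul_pow_le_succ_pow ha hs
    _ ≤ (a + 1)! * stirlingSecond m (a + 1) + (a + 1) * a ^ m := hlower

end Nat

theorem natCast_add_mul_natLog_le_Lkt {k t : ℕ} (h : t ≤ k) :
    ((t + 1 + (k - t + 1) * Nat.log 2 ((t + 1) * (k - t + 1)) : ℕ) : ℝ) ≤ Lkt k t := by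
  have hcast : ((k - t + 1 : ℕ) : ℝ) = (k : ℝ) - t + 1 := by push_cast [h]; ring
  have hlog := Real.natLog_le_logb ((t + 1) * (k - t + 1)) 2
  rw [Lkt, ← hcast, ← Nat.cast_add_one, ← Nat.cast_mul]
  push_cast
  gcongr
  exact_mod_cast hlog

theorem stmt_7 (k t n : ℕ) (ht : 1 ≤ t) (hk : t + 3 ≤ k) (hn : (n : ℝ) ≥ 2 * Lkt k t) :
    t * stirling (n - t - 2) (k - t - 2) < stirling (n - t - 3) (k - t - 1) := by
  obtain ⟨a, rfl⟩ := Nat.exists_eq_add_of_le hk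
  have hL := natCast_add_mul_natLog_le_Lkt (k := t + 3 + a) (t := t) (by omega)
  rw [show t + 3 + a - t + 1 = a + 4 by omega] at hL
  set ℓ := Nat.log 2 ((t + 1) * (a + 4))
  have hn' : 2 * (t + 1 + (a + 4) * ℓ) ≤ n := by
    exact_mod_cast (by push_cast at hL ⊢; linarith : ((2 * (t + 1 + (a + 4) * ℓ) : ℕ) : ℝ) ≤ n)
  rw [stirling_eq_stirlingSecond, show n - t - 2 = n - t - 3 + 1 by omega,
    show t + 3 + a - t - 2 = a + 1 by omega, show t + 3 + a - t - 1 = a + 1 + 1 by omega]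
  refine Nat.mul_stirlingSecond_succ_lt (s := 2 * ℓ) (by omega) ?_ ?_
  · have : (a + 1) * (2 * ℓ) ≤ 2 * ((a + 4) * ℓ) := by nlinarith
    omega
  · have hP : (t + 1) * (a + 4) < 2 ^ ℓ * 2 := Nat.lt_pow_succ_log_self one_lt_two _
    have hamgm : 4 * t ≤ (t + 1) ^ 2 := by nlinarith
    have hbound : 4 * ((a + 1 + 1) * (t * (a + 1) + 1)) ≤ ((t + 1) * (a + 4)) ^ 2 := by
      rw [mul_pow]; nlinarith
    have hsq := Nat.pow_lt_pow_left hP two_ne_zero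
    rw [pow_mul']
    nlinarith
end

section
/- Let k ≥ t+3 ≥ 4 and n ≥ 2L(k,t), where L(k,t) = (t+1)+(k-t+1)·log₂((t+1)(k-t+1)). Then the function s ↦ S(n-t-s, k-t-s) + s·t is decreasing as s ranges over the integers in [2, k-t-1]. -/
/-! The step from `s` to `s + 1` lowers both arguments of `S` by one, and the recurrence
`S(m+1, j+1) = S(m, j) + (j+1)·S(m, j+1)` shows that this costs at least `2^(m-j) = 2^(n-k)`,
while the linear term gains only `t`. The hypothesis on `n` gives `n > k + t`, so `2^(n-k) > t`. -/

theorem stirling_succ_succ (n k : ℕ) :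
    stirling (n + 1) (k + 1) = stirling n k + (k + 1) * stirling n (k + 1) := rfl

theorem stirling_eq_zero_of_lt : ∀ {n k : ℕ}, n < k → stirling n k = 0
  | 0, _ + 1, _ => rfl
  | n + 1, k + 1, h => by
    rw [stirling_succ_succ, stirling_eq_zero_of_lt (by omega : n < k),
      stirling_eq_zero_of_lt (by omega : n < k + 1), mul_zero, add_zero]

theorem stirling_self : ∀ n : ℕ, stirling n n = 1
  | 0 => rfl
  | n + 1 => by
    rw [stirling_succ_succ, stirling_self n, stirling_eq_zero_of_lt (Nat.lt_succ_self n), mul_zero, add_zero]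

theorem two_pow_sub_le_stirling {j : ℕ} (hj : 2 ≤ j) {m : ℕ} (hjm : j ≤ m) :
    2 ^ (m - j) ≤ stirling m j := by
  obtain ⟨i, rfl⟩ : ∃ i, j = i + 1 := ⟨j - 1, by omega⟩
  induction m, hjm using Nat.le_induction with
  | base => simp [stirling_self]
  | succ m hm ih =>
    rw [stirling_succ_succ, Nat.sub_add_comm hm, pow_succ]
    calc 2 ^ (m - (i + 1)) * 2 ≤ stirling m (i + 1) * (i + 1) := Nat.mul_le_mul ih hj
      _ ≤ stirling m i + (i + 1) * stirling m (i + 1) := by rw [mul_comm]; exact le_add_self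

theorem stirling_add_le_stirling_succ_succ {m j c : ℕ} (hj : 1 ≤ j) (hjm : j < m)
    (hc : c ≤ 2 ^ (m - j)) : stirling m j + c ≤ stirling (m + 1) (j + 1) := by
  have hpow : 2 ^ (m - j) ≤ (j + 1) * stirling m (j + 1) :=
    calc 2 ^ (m - j) = 2 * 2 ^ (m - (j + 1)) := by rw [← pow_succ']; congr 1; omega
      _ ≤ (j + 1) * stirling m (j + 1) :=
        Nat.mul_le_mul (by omega) (two_pow_sub_le_stirling (by omega) hjm)
  rw [stirling_succ_succ]
  omega

theorem add_lt_of_two_mul_Lkt_le {k t n : ℕ} (hk : t + 3 ≤ k) (hn : 2 * Lkt k t ≤ n) :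
    k + t < n := by
  have hkR : (t : ℝ) + 3 ≤ k := by exact_mod_cast hk
  have hprod : (4 : ℝ) ≤ ((t : ℝ) + 1) * ((k : ℝ) - t + 1) := by
    nlinarith [(Nat.cast_nonneg t : (0 : ℝ) ≤ t)]
  have hlog : (2 : ℝ) ≤ Real.logb 2 (((t : ℝ) + 1) * ((k : ℝ) - t + 1)) := by
    rw [Real.le_logb_iff_rpow_le (by norm_num) (by linarith)]
    norm_num [hprod]
  have : (k : ℝ) + t < n := by
    unfold Lkt at hn
    nlinarith
  exact_mod_cast this

theorem stmt_11_general (k t n : ℕ) (hk : t + 3 ≤ k) (hn : (n : ℝ) ≥ 2 * Lkt k t) :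
    ∀ s : ℕ, 2 ≤ s → s + 1 ≤ k - t - 1 →
      stirling (n - t - (s + 1)) (k - t - (s + 1)) + (s + 1) * t ≤
        stirling (n - t - s) (k - t - s) + s * t := by
  intro s _ hsk
  have hkn := add_lt_of_two_mul_Lkt_le hk hn
  have hm : n - t - s = n - t - (s + 1) + 1 := by omega
  have hj : k - t - s = k - t - (s + 1) + 1 := by omega
  have hgap : n - t - (s + 1) - (k - t - (s + 1)) = n - k := by omega
  have ht : t ≤ 2 ^ (n - k) :=
    Nat.lt_two_pow_self.le.trans (Nat.pow_le_pow_right (by norm_num) (by omega))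
  have hstep := stirling_add_le_stirling_succ_succ (m := n - t - (s + 1))
    (j := k - t - (s + 1)) (by omega) (by omega) (hgap ▸ ht)
  rw [hm, hj, add_one_mul]
  omega

theorem stmt_11 (k t n : ℕ) (ht : 1 ≤ t) (hk : t + 3 ≤ k) (hn : (n : ℝ) ≥ 2 * Lkt k t) :
    ∀ s : ℕ, 2 ≤ s → s + 1 ≤ k - t - 1 →
      stirling (n - t - (s + 1)) (k - t - (s + 1)) + (s + 1) * t ≤
        stirling (n - t - s) (k - t - s) + s * t :=
  stmt_11_general k t n hk hn
end

section
/- Let k ≥ 2t+3 and n ≥ 2L(k,t), where L(k,t) = (t+1) + (k-t+1)·log₂((t+1)(k-t+1)). Then |H(n,k,t)| > |A(n,k,t)|, i.e., Σ_{j=1}^{k-t} (−1)^{j−1}·C(k-t,j)·S(n-ت-j, k-t-j) + t > (t+2)·S(n-t-1, k-t-1) − (t+1)·S(n-t-2, k-t-2). -/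
/-!
Put `m = k - t` and `N = n - t`. The `j = 1` term of the alternating sum is `m S(N-1, m-1)` and
the others add up to at least `-∑_{j ≥ 2} C(m,j) S(N-j, m-j)`; as `m ≥ t + 3`, it suffices that
this tail is smaller than `S(N-1, m-1)`.

Multiply by `(m-1)!`. Since `i! S(n,i)` counts surjections, `∑ C(k,i) i! S(n,i) = k^n`, which gives
`k! S(n,k) ≤ k^n` and `(m-1)! S(N-1, m-1) ≥ (m-1)^(N-1) - (m-1)(m-2)^(N-1)`. With
`r = (m-2)/(m-1)` and `q = m r^(N-m)`, Bernoulli's inequality `m - j ≤ (m-1) r^(j-1)` bounds the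
`j`-th tail term by `(m/2) q^(j-1) (m-1)^(N-1)`, so the tail is at most `m q (m-1)^(N-1)` while
the main term is at least `(1 - q)(m-1)^(N-1)`. The threshold on `n` is what makes
`r^(N-m) ≤ exp(-(N-m)/(m-1)) ≤ 1/(2m²)`, i.e. `2mq ≤ 1`.
-/

open Finset Real
open scoped Nat

def surjCount (n k : ℕ) : ℕ := k ! * stirling n k

lemma surjCount_succ_succ (n k : ℕ) :
    surjCount (n + 1) (k + 1) = (k + 1) * (surjCount n k + surjCount n (k + 1)) := by
  simp only [surjCount, stirling, Nat.factorial_succ]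
  ring

lemma sum_range_choose_succ_mul (f : ℕ → ℕ) (k : ℕ) :
    ∑ i ∈ range (k + 2), (k + 1).choose i * f i =
      ∑ j ∈ range (k + 1), k.choose j * (f j + f (j + 1)) := by
  have hshift : ∑ i ∈ range (k + 2), k.choose i * f i = ∑ i ∈ range (k + 1), k.choose i * f i := by
    rw [sum_range_succ, Nat.choose_succ_self, zero_mul, add_zero]
  rw [sum_range_succ'] at hshift ⊢
  simp only [Nat.choose_succ_succ', Nat.choose_zero_right, add_mul, mul_add, sum_add_distrib]
    at hshift ⊢
  omega

theorem sum_choose_mul_surjCount (n k : ℕ) :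
    ∑ i ∈ range (k + 1), k.choose i * surjCount n i = k ^ n := by
  induction n generalizing k with
  | zero =>
    rw [sum_range_succ']
    simp [surjCount, stirling]
  | succ n ih =>
    cases k with
    | zero => simp [surjCount, stirling]
    | succ k =>
      have hterm (j : ℕ) : (k + 1).choose (j + 1) * surjCount (n + 1) (j + 1) =
          (k + 1) * (k.choose j * (surjCount n j + surjCount n (j + 1))) := by
        rw [surjCount_succ_succ, ← mul_assoc, ← Nat.add_one_mul_choose_eq]
        ring
      rw [sum_range_succ']
      simp only [hterm, ← mul_sum, ← sum_range_choose_succ_mul, ih]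
      simp [surjCount, stirling, pow_succ']

theorem surjCount_le_pow (n k : ℕ) : surjCount n k ≤ k ^ n := by
  rw [← sum_choose_mul_surjCount, sum_range_succ, Nat.choose_self, one_mul]
  exact le_add_self

lemma choose_succ_le_succ_mul_choose {k i : ℕ} (hi : i ≤ k) :
    (k + 1).choose i ≤ (k + 1) * k.choose i := by
  rw [mul_comm, Nat.choose_mul_succ_eq]
  exact le_mul_of_one_le_right' (by omega)

theorem pow_le_surjCount_add (n k : ℕ) : (k + 1) ^ n ≤ surjCount n (k + 1) + (k + 1) * k ^ n := by
  rw [← sum_choose_mul_surjCount n (k + 1), sum_range_succ, Nat.choose_self, one_mul, add_comm,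
    ← sum_choose_mul_surjCount n k, mul_sum]
  refine add_le_add_right (sum_le_sum fun i hi => ?_) _
  rw [← mul_assoc]
  exact Nat.mul_le_mul_right _ (choose_succ_le_succ_mul_choose (mem_range_succ_iff.mp hi))

lemma sub_le_mul_pow_sub_one_div {a : ℝ} (ha : 1 ≤ a) (i : ℕ) : a - i ≤ a * ((a - 1) / a) ^ i := by
  have ha0 : 0 < a := by linarith
  have hbase : (a - 1) / a = 1 + -a⁻¹ := by field_simp; ring
  have hx : -2 ≤ -a⁻¹ := by
    have : a⁻¹ ≤ 1 := inv_le_one_of_one_le₀ ha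
    linarith
  calc a - i = a * (1 + i * -a⁻¹) := by field_simp; ring
    _ ≤ a * ((a - 1) / a) ^ i := by
      rw [hbase]; exact mul_le_mul_of_nonneg_left (one_add_mul_le_pow hx i) ha0.le

lemma pow_sub_one_div_le_exp {a : ℝ} (ha : 1 ≤ a) (e : ℕ) : ((a - 1) / a) ^ e ≤ exp (-(e / a)) := by
  have ha0 : 0 < a := by linarith
  have hbase : (a - 1) / a = 1 - a⁻¹ := by field_simp
  rw [hbase, show -(e / a) = e * -a⁻¹ by ring, exp_nat_mul]
  exact pow_le_pow_left₀ (by simpa using inv_le_one_of_one_le₀ ha) (one_sub_le_exp_neg _) e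

lemma factorial_mul_choose_mul_stirling_le (m N : ℕ) {j : ℕ} (hj : 1 ≤ j) (hjm : j ≤ m) :
    (m - 1)! * (m.choose j * stirling (N - j) (m - j)) ≤
      m.choose j * (m - 1).descFactorial (j - 1) * (m - j) ^ (N - j) := by
  have hfac : (m - 1)! = (m - j)! * (m - 1).descFactorial (j - 1) := by
    rw [← Nat.factorial_mul_descFactorial (by omega : j - 1 ≤ m - 1),
      show m - 1 - (j - 1) = m - j by omega]
  calc (m - 1)! * (m.choose j * stirling (N - j) (m - j))
      = m.choose j * (m - 1).descFactorial (j - 1) * surjCount (N - j) (m - j) := by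
        rw [hfac, surjCount]; ring
    _ ≤ _ := Nat.mul_le_mul_left _ (surjCount_le_pow _ _)

lemma choose_mul_descFactorial_mul_pow_le (m N : ℕ) {j : ℕ} (hj : 2 ≤ j) (hjm : j ≤ m)
    (hmN : m ≤ N) :
    (m.choose j * (m - 1).descFactorial (j - 1) * ((m - j : ℕ) : ℝ) ^ (N - j) : ℝ) ≤
      m / 2 * (m * (((m : ℝ) - 2) / (m - 1)) ^ (N - m)) ^ (j - 1) * ((m : ℝ) - 1) ^ (N - 1) := by
  set a : ℝ := (m : ℝ) - 1
  set r : ℝ := ((m : ℝ) - 2) / (m - 1)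
  have ha : 1 ≤ a := by
    have : (2 : ℝ) ≤ m := by exact_mod_cast hj.trans hjm
    linarith
  have hr0 : 0 ≤ r := div_nonneg (by linarith) (by linarith)
  have hr1 : r ≤ 1 := div_le_one_of_le₀ (by linarith) (by linarith)
  have hchoose : (m.choose j : ℝ) ≤ m ^ j / 2 := by
    refine (Nat.choose_le_pow_div j m).trans (div_le_div_of_nonneg_left (by positivity) two_pos ?_)
    exact_mod_cast (Nat.factorial_le hj : 2 ! ≤ j !)
  have hdesc : ((m - 1).descFactorial (j - 1) : ℝ) ≤ a ^ (j - 1) := by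
    have : ((m - 1 : ℕ) : ℝ) = a := by push_cast [show 1 ≤ m by omega]; rfl
    rw [← this]; exact_mod_cast Nat.descFactorial_le_pow _ _
  have hbase : ((m - j : ℕ) : ℝ) ≤ a * r ^ (j - 1) := by
    have h := sub_le_mul_pow_sub_one_div ha (j - 1)
    rw [show (a - 1) / a = r by simp only [a, r]; ring_nf] at h
    convert h using 1
    push_cast [hjm, show 1 ≤ j by omega]; ring
  have hpow : ((m - j : ℕ) : ℝ) ^ (N - j) ≤ a ^ (N - j) * (r ^ (N - m)) ^ (j - 1) := by
    calc ((m - j : ℕ) : ℝ) ^ (N - j) ≤ (a * r ^ (j - 1)) ^ (N - j) := by gcongr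
      _ = a ^ (N - j) * (r ^ (N - j)) ^ (j - 1) := by
        rw [mul_pow, ← pow_mul, ← pow_mul, mul_comm (j - 1)]
      _ ≤ a ^ (N - j) * (r ^ (N - m)) ^ (j - 1) := by
        gcongr a ^ (N - j) * ?_ ^ (j - 1)
        exact pow_le_pow_of_le_one hr0 hr1 (by omega)
  calc (m.choose j * (m - 1).descFactorial (j - 1) * ((m - j : ℕ) : ℝ) ^ (N - j) : ℝ)
      ≤ m ^ j / 2 * a ^ (j - 1) * (a ^ (N - j) * (r ^ (N - m)) ^ (j - 1)) := by gcongr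
    _ = m / 2 * (m * r ^ (N - m)) ^ (j - 1) * a ^ (N - 1) := by
      rw [show N - 1 = (j - 1) + (N - j) by omega, show j = (j - 1) + 1 from by omega]
      simp only [Nat.add_sub_cancel]
      ring

lemma sum_Icc_pow_sub_one_le {q : ℝ} (hq0 : 0 ≤ q) (hq1 : q < 1) (m : ℕ) :
    ∑ j ∈ Icc 2 m, q ^ (j - 1) ≤ q / (1 - q) := by
  rw [← Ico_add_one_right_eq_Icc, ← sum_Ico_add' (fun j => q ^ (j - 1)) 1 m 1]
  simpa using geom_sum_Ico_le_of_lt_one hq0 hq1 (m := 1) (n := m)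

lemma factorial_mul_sum_choose_mul_stirling_le {m N : ℕ} (hm : 2 ≤ m) (hmN : m ≤ N)
    (hq : m * (((m : ℝ) - 2) / (m - 1)) ^ (N - m) ≤ 1 / 2) :
    ((m - 1)! : ℝ) * ((∑ j ∈ Icc 2 m, m.choose j * stirling (N - j) (m - j) : ℕ) : ℝ) ≤
      m * (m * (((m : ℝ) - 2) / (m - 1)) ^ (N - m)) * ((m : ℝ) - 1) ^ (N - 1) := by
  set a : ℝ := (m : ℝ) - 1
  set q : ℝ := m * (((m : ℝ) - 2) / (m - 1)) ^ (N - m)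
  have hm2 : (2 : ℝ) ≤ m := by exact_mod_cast hm
  have ha : 1 ≤ a := by linarith
  have hq0 : 0 ≤ q :=
    mul_nonneg (by positivity) (pow_nonneg (div_nonneg (by linarith) (by linarith)) _)
  calc ((m - 1)! : ℝ) * ((∑ j ∈ Icc 2 m, m.choose j * stirling (N - j) (m - j) : ℕ) : ℝ)
      ≤ ∑ j ∈ Icc 2 m, m / 2 * a ^ (N - 1) * q ^ (j - 1) := by
        rw [Nat.cast_sum, mul_sum]
        refine sum_le_sum fun j hj => ?_
        obtain ⟨hj, hjm⟩ := mem_Icc.mp hj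
        calc ((m - 1)! : ℝ) * (m.choose j * stirling (N - j) (m - j) : ℕ)
            ≤ (m.choose j * (m - 1).descFactorial (j - 1) * ((m - j : ℕ) : ℝ) ^ (N - j) : ℝ) := by
              exact_mod_cast factorial_mul_choose_mul_stirling_le m N (by omega) hjm
          _ ≤ _ := (choose_mul_descFactorial_mul_pow_le m N hj hjm hmN).trans_eq (by ring)
    _ = m / 2 * a ^ (N - 1) * ∑ j ∈ Icc 2 m, q ^ (j - 1) := by rw [mul_sum]
    _ ≤ m / 2 * a ^ (N - 1) * (2 * q) := by
        have hgeom : ∑ j ∈ Icc 2 m, q ^ (j - 1) ≤ 2 * q := by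
          refine (sum_Icc_pow_sub_one_le hq0 (by linarith) m).trans ?_
          rw [div_le_iff₀ (by linarith)]
          nlinarith
        gcongr
    _ = m * q * a ^ (N - 1) := by ring

lemma sub_mul_pow_le_factorial_mul_stirling {m N : ℕ} (hm : 2 ≤ m) (hmN : m ≤ N) :
    (1 - m * (((m : ℝ) - 2) / (m - 1)) ^ (N - m)) * ((m : ℝ) - 1) ^ (N - 1) ≤
      (m - 1)! * stirling (N - 1) (m - 1) := by
  set a : ℝ := (m : ℝ) - 1
  set r : ℝ := ((m : ℝ) - 2) / (m - 1)
  have hm2 : (2 : ℝ) ≤ m := by exact_mod_cast hm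
  have ha : 1 ≤ a := by linarith
  have hr0 : 0 ≤ r := div_nonneg (by linarith) (by linarith)
  have hr1 : r ≤ 1 := div_le_one_of_le₀ (by linarith) (by linarith)
  have hsurj : a ^ (N - 1) ≤ (m - 1)! * stirling (N - 1) (m - 1) + a * ((m : ℝ) - 2) ^ (N - 1) := by
    have h := pow_le_surjCount_add (N - 1) (m - 2)
    rw [show m - 2 + 1 = m - 1 by omega, surjCount] at h
    have h1 : ((m - 1 : ℕ) : ℝ) = a := by push_cast [show 1 ≤ m by omega]; rfl
    have h2 : ((m - 2 : ℕ) : ℝ) = (m : ℝ) - 2 := by push_cast [hm]; rfl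
    rw [← h1, ← h2]; exact_mod_cast h
  have htail : a * ((m : ℝ) - 2) ^ (N - 1) ≤ m * r ^ (N - m) * a ^ (N - 1) := by
    have hr : ((m : ℝ) - 2) ^ (N - 1) = r ^ (N - 1) * a ^ (N - 1) := by
      rw [← mul_pow, div_mul_cancel₀ _ (by linarith)]
    rw [hr, ← mul_assoc]
    refine mul_le_mul_of_nonneg_right ?_ (pow_nonneg (by linarith) _)
    exact mul_le_mul (by linarith) (pow_le_pow_of_le_one hr0 hr1 (by omega)) (pow_nonneg hr0 _)
      (by linarith)
  linarith

theorem sum_choose_mul_stirling_lt {m N : ℕ} (hm : 2 ≤ m)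
    (hδ : 2 * m ^ 2 * (((m : ℝ) - 2) / (m - 1)) ^ (N - m) ≤ 1) :
    ∑ j ∈ Icc 2 m, m.choose j * stirling (N - j) (m - j) < stirling (N - 1) (m - 1) := by
  have hm2 : (2 : ℝ) ≤ m := by exact_mod_cast hm
  have hmN : m ≤ N := by
    by_contra h
    rw [Nat.sub_eq_zero_of_le (by omega), pow_zero, mul_one] at hδ
    nlinarith
  have hq : 2 * m * (m * (((m : ℝ) - 2) / (m - 1)) ^ (N - m)) ≤ 1 := by linarith
  have hupper := factorial_mul_sum_choose_mul_stirling_le hm hmN (by nlinarith)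
  have hlower := sub_mul_pow_le_factorial_mul_stirling hm hmN
  set q : ℝ := m * (((m : ℝ) - 2) / (m - 1)) ^ (N - m)
  have hgap : m * q < 1 - q := by nlinarith
  have hA : (0 : ℝ) < ((m : ℝ) - 1) ^ (N - 1) := pow_pos (by linarith) _
  have key : ((m - 1)! : ℝ) * ((∑ j ∈ Icc 2 m, m.choose j * stirling (N - j) (m - j) : ℕ) : ℝ) <
      ((m - 1)! : ℝ) * (stirling (N - 1) (m - 1) : ℕ) := by
    nlinarith [mul_lt_mul_of_pos_right hgap hA]
  exact_mod_cast lt_of_mul_lt_mul_left key (Nat.cast_nonneg _)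

lemma two_mul_sq_mul_pow_le_one {m e : ℕ} (hm : 2 ≤ m)
    (he : ((m : ℝ) - 1) * log (2 * m ^ 2) ≤ e) :
    2 * m ^ 2 * (((m : ℝ) - 2) / (m - 1)) ^ e ≤ 1 := by
  have ha : (1 : ℝ) ≤ m - 1 := by
    have : (2 : ℝ) ≤ m := by exact_mod_cast hm
    linarith
  have hpos : (0 : ℝ) < 2 * m ^ 2 := by positivity
  have hexp : -(e / ((m : ℝ) - 1)) ≤ -log (2 * m ^ 2) := by
    rw [neg_le_neg_iff, le_div_iff₀ (by linarith), mul_comm]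
    exact he
  calc 2 * m ^ 2 * (((m : ℝ) - 2) / (m - 1)) ^ e
      ≤ 2 * m ^ 2 * exp (-(e / ((m : ℝ) - 1))) := by
        gcongr
        rw [show (m : ℝ) - 2 = m - 1 - 1 by ring]
        exact pow_sub_one_div_le_exp ha e
    _ ≤ 2 * m ^ 2 * exp (-log (2 * m ^ 2)) := by gcongr
    _ = 1 := by rw [exp_neg, exp_log hpos, mul_inv_cancel₀ hpos.ne']

lemma log_le_logb_two {x : ℝ} (hx : 1 ≤ x) : log x ≤ logb 2 x := by
  rw [logb, le_div_iff₀ (log_pos one_lt_two)]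
  nlinarith [log_two_lt_d9, log_nonneg hx]

lemma mul_log_two_mul_sq_le_of_two_mul_Lkt_le (k t n : ℕ) (ht : 1 ≤ t) (htk : t + 2 ≤ k)
    (hn : 2 * Lkt k t ≤ n) :
    (((k - t : ℕ) : ℝ) - 1) * log (2 * ((k - t : ℕ) : ℝ) ^ 2) ≤ ((n - k : ℕ) : ℝ) := by
  set m : ℝ := ((k - t : ℕ) : ℝ) with hm
  set T : ℝ := ((t : ℝ) + 1) * (m + 1)
  have hmkt : m = (k : ℝ) - t := by rw [hm]; push_cast [show t ≤ k by omega]; rfl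
  have hm2 : (2 : ℝ) ≤ m := by rw [hm]; exact_mod_cast (by omega : 2 ≤ k - t)
  have ht1 : (1 : ℝ) ≤ t := by exact_mod_cast ht
  have h2mT : 2 * m ≤ T := by nlinarith
  have hL : 0 ≤ logb 2 T := logb_nonneg one_lt_two (by nlinarith)
  have hlog : log (2 * m ^ 2) ≤ 2 * logb 2 T - 1 := by
    have hsq : 2 * m ^ 2 = (2 * m) ^ 2 / 2 := by ring
    calc log (2 * m ^ 2) ≤ logb 2 (2 * m ^ 2) := log_le_logb_two (by nlinarith)
      _ = 2 * logb 2 (2 * m) - 1 := by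
        rw [hsq, logb_div (by positivity) two_ne_zero, logb_pow, logb_self_eq_one one_lt_two]
        push_cast; ring
      _ ≤ 2 * logb 2 T - 1 := by gcongr; exact one_lt_two
  have hnk : (n : ℝ) - k ≤ ((n - k : ℕ) : ℝ) := by
    rcases le_total k n with h | h
    · rw [Nat.cast_sub h]
    · rw [Nat.sub_eq_zero_of_le h, Nat.cast_zero, sub_nonpos]
      exact_mod_cast h
  have hLkt : Lkt k t = (t + 1) + (m + 1) * logb 2 T := by
    simp only [Lkt, T, hmkt]
  nlinarith [mul_le_mul_of_nonneg_left hlog (by linarith : (0 : ℝ) ≤ m - 1)]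

lemma sub_sum_le_sum_neg_one_pow_mul (f : ℕ → ℤ) (hf : ∀ j, 0 ≤ f j) {m : ℕ} (hm : 1 ≤ m) :
    f 1 - ∑ j ∈ Icc 2 m, f j ≤ ∑ j ∈ Icc 1 m, (-1) ^ (j - 1) * f j := by
  rw [← insert_Icc_add_one_left_eq_Icc (α := ℕ) hm, sum_insert (by simp), sub_eq_add_neg,
    ← sum_neg_distrib]
  simp only [Nat.sub_self, pow_zero, one_mul, Nat.reduceAdd]
  gcongr with j
  rcases neg_one_pow_eq_or ℤ (j - 1) with h | h <;> rw [h] <;> linarith [hf j]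

theorem stmt_18 (k t n : ℕ) (ht : 1 ≤ t) (hk : 2 * t + 3 ≤ k) (hn : (n : ℝ) ≥ 2 * Lkt k t) :
    (∑ j ∈ Finset.Icc 1 (k - t),
        (-1 : ℤ) ^ (j - 1) * Nat.choose (k - t) j * stirling (n - t - j) (k - t - j)) + t >
      ((t : ℤ) + 2) * stirling (n - t - 1) (k - t - 1) -
        ((t : ℤ) + 1) * stirling (n - t - 2) (k - t - 2) := by
  set m := k - t
  set N := n - t
  have hδ := two_mul_sq_mul_pow_le_one (m := m) (e := N - m) (by omega)
    (by rw [show N - m = n - k by omega]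
        exact mul_log_two_mul_sq_le_of_two_mul_Lkt_le k t n ht (by omega) hn)
  have hcore : (∑ j ∈ Icc 2 m, (m.choose j * stirling (N - j) (m - j) : ℤ)) <
      stirling (N - 1) (m - 1) := by
    exact_mod_cast sum_choose_mul_stirling_lt (by omega) hδ
  have halternating :=
    sub_sum_le_sum_neg_one_pow_mul (fun j => (m.choose j * stirling (N - j) (m - j) : ℤ))
      (fun j => by positivity) (by omega : 1 ≤ m)
  simp only [Nat.choose_one_right] at halternating
  have hmain : ((t : ℤ) + 3) * stirling (N - 1) (m - 1) ≤ m * stirling (N - 1) (m - 1) :=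
    mul_le_mul_of_nonneg_right (by omega) (by positivity)
  simp only [mul_assoc, gt_iff_lt]
  linarith [(by positivity : (0 : ℤ) ≤ ((t : ℤ) + 1) * stirling (N - 2) (m - 2))]
end
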